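/- Let ρ be a mirror representation of the blob algebra b_n on (K²)^{⊗2n}, and let w be a loop-free word in the generators {e, 𝒰_1,…,𝒰_{n−1}} of b_n. Then the matrix ρ(w) is mask equivalent to R(f(w)). -/

import Mathlib

/-!
Unfold a blob diagram into a pairing of the boundary nodes of `T_{2n}`: each line lifts to two
lines, mirror images of each other in the central axis, except that a blobbed line is joined to
its own mirror image. A matrix has the mask of a pairing when its entry at `(v, w)` is nonzero
exactly if `v, w` meet the constraint of every line (equal letters at the ends of a through line,
different letters at the ends of a cap). If `G` has the mask of `U_j` and `M` that of a pairing in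
which the cap of `U_j` closes no loop, every entry of `G * M` is a sum with at most one nonzero
term, so over a domain `G * M` has the mask of the stacked pairing. At the level of masks the
letters `e` and `𝒰_i` act on unfoldings as `U_0` and `U_{-i} U_i` do, and loop-freeness of the
word in `b_n` (no closed loop, no two blobs meeting) is exactly what keeps these caps from
closing loops. By induction along the word, `ρ(w)` and `R(f(w))` both have the mask of the
unfolding of `w`.
-/

namespace TLBlob

/-- The boundary nodes of an `(n,m)` Temperley–Lieb diagram: `Sum.inl i` is the
`i`-th northern node (0-based), `Sum.inr j` the `j`-th southern node (0-based). -/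
abbrev TLNode (n m : ℕ) := Sum (Fin n) (Fin m)

/-- Position of a node in the linear order obtained by reading the northern nodes
left to right and then the southern nodes right to left (so that noncrossing
matchings in the rectangle correspond to noncrossing chords). -/
def nodePos {n m : ℕ} : TLNode n m → ℕ
  | Sum.inl i => (i : ℕ)
  | Sum.inr j => n + m - 1 - (j : ℕ)

/-- An `(n,m)` Temperley–Lieb diagram: a noncrossing perfect matching (fixed-point
free involution) of the `n` northern and `m` southern nodes. -/
structure TLDiagram (n m : ℕ) where
  pair : TLNode n m → TLNode n m
  involutive : Function.Involutive pair
  fixedFree : ∀ v, pair v ≠ v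
  noncrossing : ∀ v w, nodePos v < nodePos w → nodePos w < nodePos (pair v) →
    nodePos (pair v) < nodePos (pair w) → False

/-- `[2] = q + q⁻¹` where `q = x²`. -/
def twoQ {K : Type*} [CommRing K] (x : Kˣ) : K := (x : K) ^ 2 + ((x⁻¹ : Kˣ) : K) ^ 2

/-- The factor `x^{sign(a-b)}(1-δ_{ab})` associated to a cup/cap line, where the
letters `1,2` of the paper are encoded as `0,1 : Fin 2`. -/
def xfac {K : Type*} [CommRing K] (x : Kˣ) (a b : Fin 2) : K :=
  if a = b then 0 else if b < a then (x : K) else ((x⁻¹ : Kˣ) : K)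

/-- The matrix `R_q(D)` associated to an `(n,m)` diagram `D`, with rows indexed by
words `v ∈ {1,2}ⁿ` (as functions `Fin n → Fin 2`) and columns by `w ∈ {1,2}ᵐ`. -/
def Rmat {K : Type*} [CommRing K] (x : Kˣ) {n m : ℕ} (D : TLDiagram n m) :
    Matrix (Fin n → Fin 2) (Fin m → Fin 2) K := fun v w =>
  (∏ p ∈ Finset.univ.filter
      (fun p : Fin n × Fin n => p.1 < p.2 ∧ D.pair (Sum.inl p.1) = Sum.inl p.2),
    xfac x (v p.1) (v p.2)) *
  (∏ p ∈ Finset.univ.filter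
      (fun p : Fin n × Fin m => D.pair (Sum.inl p.1) = Sum.inr p.2),
    (if v p.1 = w p.2 then (1 : K) else 0)) *
  (∏ p ∈ Finset.univ.filter
      (fun p : Fin m × Fin m => p.1 < p.2 ∧ D.pair (Sum.inr p.1) = Sum.inr p.2),
    xfac x (w p.1) (w p.2))

/-- Two matrices are mask equivalent if they have zero entries in the same places. -/
def MaskEquiv {K : Type*} [CommRing K] {α β : Type*} (M N : Matrix α β K) : Prop :=
  ∀ i j, M i j = 0 ↔ N i j = 0

/-- Nodes of the concatenation `D|D'` of an `(n,m)` and an `(m,l)` diagram: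
northern, middle, and southern nodes. -/
abbrev TriNode (n m l : ℕ) := Sum (Fin n) (Sum (Fin m) (Fin l))

def inUp {n m l : ℕ} : TLNode n m → TriNode n m l
  | Sum.inl i => Sum.inl i
  | Sum.inr j => Sum.inr (Sum.inl j)

def inDown {n m l : ℕ} : TLNode m l → TriNode n m l
  | Sum.inl j => Sum.inr (Sum.inl j)
  | Sum.inr k => Sum.inr (Sum.inr k)

def inOut {n m l : ℕ} : TLNode n l → TriNode n m l
  | Sum.inl i => Sum.inl i
  | Sum.inr k => Sum.inr (Sum.inr k)

/-- Two nodes of the concatenation `D|D'` are linked if they are joined by a line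
of `D` or of `D'`. -/
def Linked {n m l : ℕ} (D : TLDiagram n m) (D' : TLDiagram m l) :
    TriNode n m l → TriNode n m l → Prop := fun u v =>
  (∃ a, inUp a = u ∧ inUp (D.pair a) = v) ∨
  (∃ a, inDown a = u ∧ inDown (D'.pair a) = v)

/-- Connectivity in the concatenation `D|D'`. -/
def Joined {n m l : ℕ} (D : TLDiagram n m) (D' : TLDiagram m l) :
    TriNode n m l → TriNode n m l → Prop :=
  Relation.ReflTransGen (Linked D D')

/-- `E` is the composite diagram `D ∘ D'`: outer nodes are paired in `E` exactly
when they are joined through the concatenation `D|D'`. -/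
def IsComposite {n m l : ℕ} (D : TLDiagram n m) (D' : TLDiagram m l)
    (E : TLDiagram n l) : Prop :=
  ∀ u v : TLNode n l, E.pair u = v ↔ (u ≠ v ∧ Joined D D' (inOut u) (inOut v))

/-- Middle nodes of the concatenation. -/
def IsMiddle {n m l : ℕ} : TriNode n m l → Prop
  | Sum.inr (Sum.inl _) => True
  | _ => False

/-- `ζ(D,D')`: the number of closed loops discarded when forming `D ∘ D'`, i.e. the
number of connected components of the concatenation graph consisting entirely of
middle nodes. -/
noncomputable def zeta {n m l : ℕ} (D : TLDiagram n m) (D' : TLDiagram m l) : ℕ :=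
  Nat.card {c : Quot (Linked D D') // ∀ v, Quot.mk (Linked D D') v = c → IsMiddle v}

/-- The identity diagram `1 ∈ D(n,n)`. -/
def IsId {n : ℕ} (E : TLDiagram n n) : Prop :=
  ∀ i : Fin n, E.pair (Sum.inl i) = Sum.inr i

/-- The diagram `𝒰_i ∈ D(n,n)` (with `1 ≤ i ≤ n-1`, nodes numbered `1,…,n`):
it pairs nodes `(i,i+1)` on the top, `(i',(i+1)')` on the bottom, and `(k,k')`
otherwise.  In the 0-based encoding these are positions `i-1` and `i`. -/
def IsU {n : ℕ} (i : ℕ) (E : TLDiagram n n) : Prop :=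
  ∃ (_ : 1 ≤ i) (h2 : i < n),
    E.pair (Sum.inl ⟨i - 1, by omega⟩) = Sum.inl ⟨i, h2⟩ ∧
    E.pair (Sum.inr ⟨i - 1, by omega⟩) = Sum.inr ⟨i, h2⟩ ∧
    ∀ k : Fin n, (k : ℕ) ≠ i - 1 → (k : ℕ) ≠ i → E.pair (Sum.inl k) = Sum.inr k

/-- The column reached after the first `k` steps of a walk encoded as a word in
`{1,2}ⁿ` (letter `1` = `0 : Fin 2` is a step increasing the column index,
letter `2` = `1 : Fin 2` a step decreasing it). -/
def col {n : ℕ} (a : Fin n → Fin 2) (k : ℕ) : ℤ :=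
  ∑ j ∈ Finset.univ.filter (fun j : Fin n => (j : ℕ) < k),
    (if a j = 0 then (1 : ℤ) else -1)

/-- A word encodes a walk on the 1-Pascal graph (column indices stay nonnegative). -/
def IsWalk {n : ℕ} (a : Fin n → Fin 2) : Prop := ∀ k, 0 ≤ col a k

/-- A pair of walks with a common endpoint, i.e. an element of `W²(n)`. -/
def WalkPair {n : ℕ} (a b : Fin n → Fin 2) : Prop :=
  IsWalk a ∧ IsWalk b ∧ col a n = col b n

/-- Vertex `(l,d)` (level `l`, column `d`) lies in the envelope of the pair `(a,b)`:
between the drawing of `b` reflected in the main vertical and the drawing of `a`,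
and not strictly inside the triangle cut off by the piecewise straight line from
`(n,i)` to `(n-i,0)` to `(n,-i)`, where `i = col a n`. -/
def vertOK {n : ℕ} (a b : Fin n → Fin 2) (l : ℕ) (d : ℤ) : Prop :=
  -(col b l) ≤ d ∧ d ≤ col a l ∧
  ((l : ℤ) - ((n : ℤ) - col a n) ≤ d ∨ d ≤ -((l : ℤ) - ((n : ℤ) - col a n)))

/-- The unit diamond tile with top vertex at level `r`, column `c` (so with
vertices `(r,c)`, `(r+1,c∓1)`, `(r+2,c)`) belongs to the tiling of the envelope
of `(a,b)`. -/
def IsTile {n : ℕ} (a b : Fin n → Fin 2) (r : ℕ) (c : ℤ) : Prop :=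
  r + 2 ≤ n ∧ (c - (r : ℤ)) % 2 = 0 ∧ vertOK a b r c ∧
  vertOK a b (r + 1) (c - 1) ∧ vertOK a b (r + 1) (c + 1) ∧ vertOK a b (r + 2) c

instance {n : ℕ} (a b : Fin n → Fin 2) (r : ℕ) (c : ℤ) : Decidable (IsTile a b r c) := by
  unfold IsTile vertOK; infer_instance

/-- The word `w((a,b))`, as the list of its (1-based) indices: scanning the tiles
of the envelope of `(a,b)` column by column (starting from the side of `a`), top
to bottom within a column, and writing `U_{r+1}` for a tile with top vertex at
level `r` (hence base at row `r+2`). -/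
def wordOf {n : ℕ} (a b : Fin n → Fin 2) : List ℕ :=
  (List.range (2 * n + 1)).flatMap fun j =>
    (List.range (n - 1)).filterMap fun r =>
      if IsTile a b r ((n : ℤ) - (j : ℤ)) then some (r + 1) else none

/-- Extend a word `v ∈ {1,2}ⁿ` by `0` beyond its length (convenience lookup). -/
def ext {n : ℕ} (v : Fin n → Fin 2) (k : ℕ) : Fin 2 :=
  if h : k < n then v ⟨k, h⟩ else 0

/-- The matrix `R(U_i) = R_q(𝒰_i)` acting on `(K²)^{⊗n}`, where `U_i` couples the
(1-based) tensor factors `i` and `i+1`. -/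
def RU {K : Type*} [CommRing K] (x : Kˣ) (n i : ℕ) :
    Matrix (Fin n → Fin 2) (Fin n → Fin 2) K := fun v w =>
  (∏ k ∈ Finset.univ.filter (fun k : Fin n => (k : ℕ) + 1 ≠ i ∧ (k : ℕ) ≠ i),
    (if v k = w k then (1 : K) else 0)) *
  xfac x (ext v (i - 1)) (ext v i) * xfac x (ext w (i - 1)) (ext w i)

/-- `R` of a word in the `U_i`: the corresponding product of matrices. -/
def Rword {K : Type*} [CommRing K] (x : Kˣ) (n : ℕ) (L : List ℕ) :
    Matrix (Fin n → Fin 2) (Fin n → Fin 2) K :=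
  (L.map (RU x n)).prod

/-- A blob diagram: an `(n,n)` Temperley–Lieb diagram together with a set of
decorated (blobbed) lines, each of which must be exposable to the western edge
(i.e. not enclosed by any other line). -/
structure BlobDiagram (n : ℕ) extends TLDiagram n n where
  deco : TLNode n n → Bool
  deco_pair : ∀ v, deco (toTLDiagram.pair v) = deco v
  deco_exposed : ∀ v, deco v = true → ∀ c,
    ¬(nodePos c < nodePos v ∧ nodePos v < nodePos (toTLDiagram.pair c))

/-- The identity blob diagram (no decorations). -/
def IsIdB {n : ℕ} (E : BlobDiagram n) : Prop :=
  IsId E.toTLDiagram ∧ ∀ v, E.deco v = false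

/-- The generator `e`: identity pairing with a blob on the line `(1,1')`. -/
def IsEB {n : ℕ} (E : BlobDiagram n) : Prop :=
  IsId E.toTLDiagram ∧ ∃ h : 0 < n, ∀ v,
    (E.deco v = true ↔ (v = Sum.inl (⟨0, h⟩ : Fin n) ∨ v = Sum.inr (⟨0, h⟩ : Fin n)))

/-- The (undecorated) generator `𝒰_i` viewed as a blob diagram. -/
def IsUB {n : ℕ} (i : ℕ) (E : BlobDiagram n) : Prop :=
  IsU i E.toTLDiagram ∧ ∀ v, E.deco v = false

/-- A node of the concatenation `D|D'` lies on a decorated line segment. -/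
def DecoratedAt {n : ℕ} (D D' : BlobDiagram n) (u : TriNode n n n) : Prop :=
  (∃ a, inUp a = u ∧ D.deco a = true) ∨ (∃ a, inDown a = u ∧ D'.deco a = true)

/-- `E` is the blob-diagram composite of `D` and `D'`: the underlying diagrams
compose, and a line of `E` is decorated exactly when one of its constituent
segments is. -/
def IsBlobComposite {n : ℕ} (D D' E : BlobDiagram n) : Prop :=
  IsComposite D.toTLDiagram D'.toTLDiagram E.toTLDiagram ∧
  ∀ u : TLNode n n, (E.deco u = true ↔
    ∃ w, Joined D.toTLDiagram D'.toTLDiagram (inOut u) w ∧ DecoratedAt D D' w)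

/-- Number of closed loops carrying no blob in the concatenation `D|D'`. -/
noncomputable def zetaPlain {n : ℕ} (D D' : BlobDiagram n) : ℕ :=
  Nat.card {c : Quot (Linked D.toTLDiagram D'.toTLDiagram) //
    (∀ v, Quot.mk _ v = c → IsMiddle v) ∧ (∀ v, Quot.mk _ v = c → ¬DecoratedAt D D' v)}

/-- Number of closed loops carrying at least one blob in the concatenation `D|D'`. -/
noncomputable def zetaBlob {n : ℕ} (D D' : BlobDiagram n) : ℕ :=
  Nat.card {c : Quot (Linked D.toTLDiagram D'.toTLDiagram) //
    (∀ v, Quot.mk _ v = c → IsMiddle v) ∧ ∃ v, Quot.mk _ v = c ∧ DecoratedAt D D' v}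

/-- Number of decorated lines of a blob diagram. -/
def decoLines {n : ℕ} (B : BlobDiagram n) : ℕ :=
  (Finset.univ.filter (fun v : TLNode n n =>
    B.deco v = true ∧ nodePos v < nodePos (B.toTLDiagram.pair v))).card

/-- Number of connected components of the concatenation `D|D'` carrying at least
one blob. -/
noncomputable def blobbedComps {n : ℕ} (D D' : BlobDiagram n) : ℕ :=
  Nat.card {c : Quot (Linked D.toTLDiagram D'.toTLDiagram) //
    ∃ v, Quot.mk _ v = c ∧ DecoratedAt D D' v}

/-- The exponent of `δ_e` arising in the composition `D · D'`: each component
carrying `k ≥ 1` blobs contributes `k - 1` blob merges. -/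
noncomputable def deltaExp {n : ℕ} (D D' : BlobDiagram n) : ℕ :=
  decoLines D + decoLines D' - blobbedComps D D'

/-- The scalar factor arising in blob diagram composition: `[2]` for each plain
loop, `γ` for each blobbed loop, and `δ_e` for each blob merge. -/
noncomputable def BlobFactor {K : Type*} [CommRing K] (x : Kˣ) (γ δe : K) {n : ℕ}
    (D D' : BlobDiagram n) : K :=
  twoQ x ^ zetaPlain D D' * γ ^ zetaBlob D D' * δe ^ deltaExp D D'

/-- `ρ` is (the restriction to the diagram basis of) a representation of the blob
algebra `b_n` with parameters `q = x²`, `γ`, `δ_e` on `(K²)^{⊗2n}`. -/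
def IsBlobRep {K : Type*} [CommRing K] (x : Kˣ) (γ δe : K) {n : ℕ}
    (ρ : BlobDiagram n → Matrix (Fin (2 * n) → Fin 2) (Fin (2 * n) → Fin 2) K) : Prop :=
  (∀ E, IsIdB E → ρ E = 1) ∧
  ∀ D D' E, IsBlobComposite D D' E → ρ D * ρ D' = BlobFactor x γ δe D D' • ρ E

/-- `ρ` is a mirror representation: for some invertible `r,s,t`, `ρ(e)` is mask
equivalent to `R_r(U_0)` and each `ρ(𝒰_i) = X_i Y_i` with `X_i ∈ [R_s(U_{-i})]`,
`Y_i ∈ [R_t(U_i)]` (the shifted generator `U_j` of `T_{2n}` acting on the 1-based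
tensor factors `n+j`, `n+j+1`). -/
def IsMirror {K : Type*} [CommRing K] {n : ℕ}
    (ρ : BlobDiagram n → Matrix (Fin (2 * n) → Fin 2) (Fin (2 * n) → Fin 2) K) : Prop :=
  ∃ r s t : Kˣ,
    (∀ E, IsEB E → MaskEquiv (ρ E) (RU r (2 * n) n)) ∧
    ∀ i : ℕ, 1 ≤ i → i + 1 ≤ n → ∃ X Y,
      (∀ U, IsUB i U → ρ U = X * Y) ∧
      MaskEquiv X (RU s (2 * n) (n - i)) ∧ MaskEquiv Y (RU t (2 * n) (n + i))

/-- `gs` is a list of generator diagrams spelling the word `w` in the generators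
of `b_n` (letter `0` stands for `e`, letter `i ≥ 1` for `𝒰_i`). -/
def MatchesWord {n : ℕ} (w : List ℕ) (gs : List (BlobDiagram n)) : Prop :=
  List.Forall₂ (fun g d => (g = 0 ∧ IsEB d) ∨ (1 ≤ g ∧ IsUB g d)) w gs

/-- The map `f` on words, letterwise `f(e) = U_0` and `f(𝒰_i) = U_{-i}U_i`, with
the shifted generator `U_j` of `T_{2n}` recorded by its unshifted 1-based index
`n + j`. -/
def fword (n : ℕ) (w : List ℕ) : List ℕ :=
  w.flatMap fun g => if g = 0 then [n] else [n - g, n + g]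

/-- Loop-free evaluation of a word in the generators of `b_n` to a single blob
diagram (no closed loops and no blob merges arise, so the value in `b_n` is the
diagram itself with coefficient 1). -/
inductive EvalBlob {n : ℕ} : List ℕ → BlobDiagram n → Prop
  | nil : ∀ E, IsIdB E → EvalBlob [] E
  | consE : ∀ (L : List ℕ) (B D E : BlobDiagram n), EvalBlob L D → IsEB B →
      IsBlobComposite B D E → zetaPlain B D = 0 → zetaBlob B D = 0 →
      deltaExp B D = 0 → EvalBlob (0 :: L) E
  | consU : ∀ (i : ℕ) (L : List ℕ) (U D E : BlobDiagram n), EvalBlob L D → 1 ≤ i →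
      IsUB i U → IsBlobComposite U D E → zetaPlain U D = 0 → zetaBlob U D = 0 →
      deltaExp U D = 0 → EvalBlob (i :: L) E

open Function

section Pairing

variable {α β : Type*}

def IsPairing (π : α → α) : Prop := Involutive π ∧ ∀ u, π u ≠ u

lemma IsPairing.conj {π : α → α} (hπ : IsPairing π) (e : α ≃ β) : IsPairing (e ∘ π ∘ e.symm) :=
  ⟨fun u => by simp [hπ.1 _], fun u h => hπ.2 (e.symm u) (by simpa [e.eq_symm_apply] using h)⟩

lemma IsPairing.apply_right_ne {p q : α} {π : α → α} (hπ : IsPairing π) (hcap : π p ≠ q) :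
    π q ≠ p :=
  fun h => hcap (by rw [← h, hπ.1])

lemma IsPairing.apply_ne {p u : α} {π : α → α} (hπ : IsPairing π) (h : u ≠ π p) : π u ≠ p :=
  fun e => h (by rw [← e, hπ.1])

variable [DecidableEq α]

/-- The pairing obtained by stacking a cap on `p, q` on top of `π`: the cap closes off `p, q`
and the lines of `π` through `p` and `q` are joined. -/
def addCap (p q : α) (π : α → α) (u : α) : α :=
  if u = p then q else if u = q then p
  else if π u = p then π q else if π u = q then π p else π u

variable {p q : α} {π : α → α}

@[simp] lemma addCap_apply_left : addCap p q π p = q := by simp [addCap]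

lemma addCap_apply_right (hpq : p ≠ q) : addCap p q π q = p := by
  simp [addCap, hpq.symm]

lemma addCap_apply_of_ne {u : α} (hp : u ≠ p) (hq : u ≠ q) (hπp : π u ≠ p) (hπq : π u ≠ q) :
    addCap p q π u = π u := by
  simp [addCap, *]

lemma addCap_apply_pair_left (hπ : IsPairing π) (hcap : π p ≠ q) : addCap p q π (π p) = π q := by
  simp [addCap, hπ.2 p, hcap, hπ.1 p]

lemma addCap_apply_pair_right (hπ : IsPairing π) (hpq : p ≠ q) (hcap : π p ≠ q) :
    addCap p q π (π q) = π p := by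
  simp [addCap, hπ.apply_right_ne hcap, hπ.2 q, hπ.1 q, hpq.symm]

lemma isPairing_addCap (hπ : IsPairing π) (hpq : p ≠ q) (hcap : π p ≠ q) :
    IsPairing (addCap p q π) := by
  have key : ∀ u, addCap p q π u ≠ u ∧ addCap p q π (addCap p q π u) = u := by
    intro u
    by_cases hp : u = p
    · subst hp; simp [addCap_apply_right hpq, hpq.symm]
    by_cases hq : u = q
    · subst hq; simp [addCap_apply_right hpq, hpq]
    by_cases hπp : u = π p
    · subst hπp
      simp [addCap_apply_pair_left hπ hcap, addCap_apply_pair_right hπ hpq hcap,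
        hπ.1.injective.eq_iff, hpq.symm]
    by_cases hπq : u = π q
    · subst hπq
      simp [addCap_apply_pair_left hπ hcap, addCap_apply_pair_right hπ hpq hcap,
        hπ.1.injective.eq_iff, hpq]
    have h1 := hπ.apply_ne hπp
    have h2 := hπ.apply_ne hπq
    rw [addCap_apply_of_ne hp hq h1 h2, addCap_apply_of_ne h1 h2 (by rwa [hπ.1]) (by rwa [hπ.1])]
    exact ⟨hπ.2 u, hπ.1 u⟩
  exact ⟨fun u => (key u).2, fun u => (key u).1⟩

lemma addCap_apply_ne_left (hπ : IsPairing π) (hpq : p ≠ q) (hcap : π p ≠ q) {u : α}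
    (hq : u ≠ q) : addCap p q π u ≠ p := by
  rwa [Ne, (isPairing_addCap hπ hpq hcap).1.eq_iff, addCap_apply_left]

lemma addCap_apply_ne_right (hπ : IsPairing π) (hpq : p ≠ q) (hcap : π p ≠ q) {u : α}
    (hp : u ≠ p) : addCap p q π u ≠ q := by
  rwa [Ne, (isPairing_addCap hπ hpq hcap).1.eq_iff, addCap_apply_right hpq]

lemma left_mem_lines_addCap_iff (hπ : IsPairing π) (hpq : p ≠ q) (hcap : π p ≠ q) {u : α}
    (hp : u ≠ p) (hq : u ≠ q) :
    p ∈ ({u, π u, addCap p q π u, π (addCap p q π u)} : Set α) ↔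
      q ∈ ({u, π u, addCap p q π u, π (addCap p q π u)} : Set α) := by
  by_cases h₁ : π u = p
  · obtain rfl : u = π p := by rw [← h₁, hπ.1]
    simp [addCap_apply_pair_left hπ hcap, hπ.1 _]
  by_cases h₂ : π u = q
  · obtain rfl : u = π q := by rw [← h₂, hπ.1]
    simp [addCap_apply_pair_right hπ hpq hcap, hπ.1 _]
  rw [addCap_apply_of_ne hp hq h₁ h₂, hπ.1 u]
  simp [Ne.symm hp, Ne.symm hq, Ne.symm h₁, Ne.symm h₂]

lemma addCap_conj (e : α ≃ β) [DecidableEq β] :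
    addCap (e p) (e q) (e ∘ π ∘ e.symm) = e ∘ addCap p q π ∘ e.symm := by
  funext u
  simp only [addCap, comp_apply, e.apply_eq_iff_eq, e.symm_apply_eq]
  split_ifs <;> simp_all

lemma TLDiagram.isPairing {n : ℕ} (D : TLDiagram n n) : IsPairing D.pair :=
  ⟨D.involutive, D.fixedFree⟩

end Pairing

section Mask

lemma fin_two_ne_add_one_iff {a b : Fin 2} : a ≠ b + 1 ↔ a = b := by
  revert a b; decide

variable {m : ℕ}

/-- Northern letters are shifted by one so that the constraint imposed by any line, cap or
through line, reads "the letters at its two ends differ". -/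
def nodeLetter (v w : Fin m → Fin 2) : TLNode m m → Fin 2
  | .inl k => v k + 1
  | .inr k => w k

def Compatible (π : TLNode m m → TLNode m m) (v w : Fin m → Fin 2) : Prop :=
  ∀ c, nodeLetter v w (π c) ≠ nodeLetter v w c

def HasMask {K : Type*} [CommRing K] (M : Matrix (Fin m → Fin 2) (Fin m → Fin 2) K)
    (π : TLNode m m → TLNode m m) : Prop :=
  ∀ v w, M v w ≠ 0 ↔ Compatible π v w

variable {K : Type*} [CommRing K] {M N : Matrix (Fin m → Fin 2) (Fin m → Fin 2) K}
  {π : TLNode m m → TLNode m m}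

lemma HasMask.maskEquiv (hM : HasMask M π) (hN : HasMask N π) : MaskEquiv M N :=
  fun v w => not_iff_not.mp ((hM v w).trans (hN v w).symm)

lemma MaskEquiv.hasMask (h : MaskEquiv M N) (hN : HasMask N π) : HasMask M π :=
  fun v w => (not_congr (h v w)).trans (hN v w)

lemma compatible_swap_iff {v w : Fin m → Fin 2} : Compatible Sum.swap v w ↔ v = w := by
  refine ⟨fun h => funext fun k => ?_, ?_⟩
  · exact (fin_two_ne_add_one_iff.mp (h (.inl k))).symm
  · rintro rfl (k | k) <;> simp [nodeLetter]

lemma hasMask_one [Nontrivial K] :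
    HasMask (1 : Matrix (Fin m → Fin 2) (Fin m → Fin 2) K) Sum.swap := by
  intro v w
  rcases eq_or_ne v w with rfl | h <;> simp [compatible_swap_iff, *]

/-- The pairing of `𝒰_j`: caps on `p, q` at the top and bottom, through lines elsewhere. -/
def capPairing (p q : Fin m) : TLNode m m → TLNode m m
  | .inl k => if k = p then .inl q else if k = q then .inl p else .inr k
  | .inr k => if k = p then .inr q else if k = q then .inr p else .inl k

lemma compatible_capPairing_iff {p q : Fin m} (hpq : p ≠ q) {v w : Fin m → Fin 2} :
    Compatible (capPairing p q) v w ↔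
      v p ≠ v q ∧ w p ≠ w q ∧ ∀ k, k ≠ p → k ≠ q → v k = w k := by
  constructor
  · intro h
    refine ⟨fun e => h (.inl p) ?_, fun e => h (.inr p) ?_, fun k hp hq => ?_⟩
    · simp [capPairing, nodeLetter, e]
    · simp [capPairing, nodeLetter, e]
    · simpa [capPairing, nodeLetter, hp, hq, fin_two_ne_add_one_iff, eq_comm] using h (.inl k)
  · rintro ⟨hv, hw, hvw⟩ (k | k) <;>
    obtain rfl | hkp := eq_or_ne k p <;> try obtain rfl | hkq := eq_or_ne k q
    all_goals simp_all [capPairing, nodeLetter, hv.symm, hw.symm]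

lemma xfac_eq_zero_iff [Nontrivial K] (x : Kˣ) {a b : Fin 2} : xfac x a b = 0 ↔ a = b := by
  unfold xfac
  split_ifs with h1 h2 <;> simp [h1, Units.ne_zero]

lemma hasMask_RU [IsDomain K] (x : Kˣ) {j : ℕ} {p q : Fin m} (hp : (p : ℕ) + 1 = j)
    (hq : (q : ℕ) = j) : HasMask (RU x m j) (capPairing p q) := by
  intro v w
  have hpq : p ≠ q := fun h => by subst h; omega
  have hext : ∀ u : Fin m → Fin 2, ext u (j - 1) = u p ∧ ext u j = u q := fun u =>
    ⟨by simp [ext, ← hp], by simp [ext, ← hq]⟩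
  rw [compatible_capPairing_iff hpq]
  simp only [RU, (hext v).1, (hext v).2, (hext w).1, (hext w).2, ne_eq, mul_eq_zero,
    xfac_eq_zero_iff, Finset.prod_eq_zero_iff, Finset.mem_filter, Finset.mem_univ, true_and,
    ite_eq_right_iff, one_ne_zero, imp_false, not_or, not_exists, not_and, not_not]
  have hk : ∀ k : Fin m, ((k : ℕ) + 1 = j ↔ k = p) ∧ ((k : ℕ) = j ↔ k = q) := fun k => by
    simp only [Fin.ext_iff]; omega
  simp only [hk]
  tauto

end Mask

section CapMul

variable {m : ℕ} {p q : Fin m} {π : TLNode m m → TLNode m m}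

lemma nodeLetter_eq_of_eqOn {u v w : Fin m → Fin 2} (huv : ∀ k, k ≠ p → k ≠ q → u k = v k)
    {c : TLNode m m} (hp : c ≠ .inl p) (hq : c ≠ .inl q) : nodeLetter u w c = nodeLetter v w c := by
  rcases c with k | k
  · simp [nodeLetter, huv k (by rintro rfl; exact hp rfl) (by rintro rfl; exact hq rfl)]
  · rfl

/-- In a nonzero term `G v u * M u w` of `(G * M) v w`, with `G` of mask `capPairing p q`, the
middle word `u` agrees with `v` off `p, q`, and its letters at `p, q` are forced by the lines of
`π` through them. -/
def middleWord (π : TLNode m m → TLNode m m) (p q : Fin m) (v w : Fin m → Fin 2) :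
    Fin m → Fin 2 := fun k =>
  if k = p then nodeLetter v w (π (.inl p))
  else if k = q then nodeLetter v w (π (.inl q)) else v k

lemma compatible_addCap_iff (hπ : IsPairing π) (hpq : p ≠ q) (hcap : π (.inl p) ≠ .inl q)
    {v w : Fin m → Fin 2} :
    Compatible (addCap (.inl p) (.inl q) π) v w ↔
      v p ≠ v q ∧ nodeLetter v w (π (.inl p)) ≠ nodeLetter v w (π (.inl q)) ∧
      ∀ c, c ≠ .inl p → c ≠ .inl q → c ≠ π (.inl p) → c ≠ π (.inl q) →
        nodeLetter v w (π c) ≠ nodeLetter v w c := by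
  have hpq' : (.inl p : TLNode m m) ≠ .inl q := by simpa using hpq
  have hA := addCap_apply_pair_left hπ hcap
  have hB := addCap_apply_pair_right hπ hpq' hcap
  constructor
  · intro h
    refine ⟨fun e => h (.inl p) (by simp [nodeLetter, e]), fun e => h _ (by rw [hA, e]),
      fun c h₁ h₂ h₃ h₄ => ?_⟩
    simpa [addCap_apply_of_ne h₁ h₂ (hπ.apply_ne h₃) (hπ.apply_ne h₄)] using h c
  · rintro ⟨hv, hab, hR⟩ c
    by_cases h₁ : c = .inl p
    · simp [h₁, nodeLetter, hv.symm]
    by_cases h₂ : c = .inl q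
    · simp [h₂, addCap_apply_right hpq', nodeLetter, hv]
    by_cases h₃ : c = π (.inl p)
    · rw [h₃, hA]; exact hab.symm
    by_cases h₄ : c = π (.inl q)
    · rw [h₄, hB]; exact hab
    rw [addCap_apply_of_ne h₁ h₂ (hπ.apply_ne h₃) (hπ.apply_ne h₄)]
    exact hR c h₁ h₂ h₃ h₄

lemma compatible_iff_of_eqOn (hπ : IsPairing π) (hcap : π (.inl p) ≠ .inl q)
    {u v w : Fin m → Fin 2} (huv : ∀ k, k ≠ p → k ≠ q → u k = v k) :
    Compatible π u w ↔
      u p = nodeLetter v w (π (.inl p)) ∧ u q = nodeLetter v w (π (.inl q)) ∧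
      ∀ c, c ≠ .inl p → c ≠ .inl q → c ≠ π (.inl p) → c ≠ π (.inl q) →
        nodeLetter v w (π c) ≠ nodeLetter v w c := by
  have hap : π (.inl p) ≠ .inl p := hπ.2 _
  have hbp : π (.inl q) ≠ .inl p := hπ.apply_right_ne hcap
  have hbq : π (.inl q) ≠ .inl q := hπ.2 _
  have hup := nodeLetter_eq_of_eqOn (w := w) huv hap hcap
  have huq := nodeLetter_eq_of_eqOn (w := w) huv hbp hbq
  constructor
  · intro h
    refine ⟨?_, ?_, fun c h₁ h₂ h₃ h₄ => ?_⟩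
    · exact (hup ▸ fin_two_ne_add_one_iff.mp (h (.inl p))).symm
    · exact (huq ▸ fin_two_ne_add_one_iff.mp (h (.inl q))).symm
    · rw [← nodeLetter_eq_of_eqOn huv h₁ h₂,
        ← nodeLetter_eq_of_eqOn huv (hπ.apply_ne h₃) (hπ.apply_ne h₄)]
      exact h c
  · rintro ⟨hp, hq, hR⟩ c
    by_cases h₁ : c = .inl p
    · rw [h₁, hup, ← hp]; exact fin_two_ne_add_one_iff.mpr rfl
    by_cases h₂ : c = .inl q
    · rw [h₂, huq, ← hq]; exact fin_two_ne_add_one_iff.mpr rfl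
    by_cases h₃ : c = π (.inl p)
    · rw [h₃, hπ.1, hup, ← hp]; exact (fin_two_ne_add_one_iff.mpr rfl).symm
    by_cases h₄ : c = π (.inl q)
    · rw [h₄, hπ.1, huq, ← hq]; exact (fin_two_ne_add_one_iff.mpr rfl).symm
    rw [nodeLetter_eq_of_eqOn huv h₁ h₂,
      nodeLetter_eq_of_eqOn huv (hπ.apply_ne h₃) (hπ.apply_ne h₄)]
    exact hR c h₁ h₂ h₃ h₄

lemma compatible_capPairing_and_compatible_iff (hπ : IsPairing π) (hpq : p ≠ q)
    (hcap : π (.inl p) ≠ .inl q) {u v w : Fin m → Fin 2} :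
    Compatible (capPairing p q) v u ∧ Compatible π u w ↔
      Compatible (addCap (.inl p) (.inl q) π) v w ∧ u = middleWord π p q v w := by
  rw [compatible_capPairing_iff hpq, compatible_addCap_iff hπ hpq hcap]
  constructor
  · rintro ⟨⟨hv, hu, huv⟩, h⟩
    obtain ⟨hp, hq, hR⟩ := (compatible_iff_of_eqOn hπ hcap fun k h₁ h₂ => (huv k h₁ h₂).symm).mp h
    refine ⟨⟨hv, hp ▸ hq ▸ hu, hR⟩, funext fun k => ?_⟩
    by_cases h₁ : k = p
    · simp [middleWord, h₁, hp]
    by_cases h₂ : k = q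
    · simp [middleWord, h₂, hq, hpq.symm]
    simp [middleWord, h₁, h₂, huv k h₁ h₂]
  · rintro ⟨⟨hv, hab, hR⟩, rfl⟩
    have huv : ∀ k, k ≠ p → k ≠ q → middleWord π p q v w k = v k := fun k h₁ h₂ => by
      simp [middleWord, h₁, h₂]
    have hp : middleWord π p q v w p = nodeLetter v w (π (.inl p)) := by simp [middleWord]
    have hq : middleWord π p q v w q = nodeLetter v w (π (.inl q)) := by
      simp [middleWord, hpq.symm]
    refine ⟨⟨hv, hp ▸ hq ▸ hab, fun k h₁ h₂ => (huv k h₁ h₂).symm⟩, ?_⟩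
    exact (compatible_iff_of_eqOn hπ hcap huv).mpr ⟨hp, hq, hR⟩

/-- Multiplying by a generator whose cap closes no loop: the sum defining the product has at
most one nonzero term, so over a domain no cancellation can occur. -/
theorem HasMask.capPairing_mul {K : Type*} [CommRing K] [IsDomain K]
    {G M : Matrix (Fin m → Fin 2) (Fin m → Fin 2) K} (hπ : IsPairing π) (hpq : p ≠ q)
    (hcap : π (.inl p) ≠ .inl q) (hG : HasMask G (capPairing p q)) (hM : HasMask M π) :
    HasMask (G * M) (addCap (.inl p) (.inl q) π) := by
  intro v w
  have hterm : ∀ u, G v u * M u w ≠ 0 ↔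
      Compatible (addCap (.inl p) (.inl q) π) v w ∧ u = middleWord π p q v w := fun u => by
    rw [mul_ne_zero_iff, hG, hM, compatible_capPairing_and_compatible_iff hπ hpq hcap]
  rw [Matrix.mul_apply, Finset.sum_eq_single (middleWord π p q v w)
    (fun u _ hu => not_not.mp fun h => hu ((hterm u).mp h).2) (by simp), hterm]
  simp

end CapMul

section Mirror

variable {n : ℕ}

/-- Strand `j` of `b_n` lifts to the two mirror-image strands `n + j` (side `true`) and
`n - 1 - j` (side `false`) of `T_{2n}`. -/
def mirrorIdx : Bool × Fin n ≃ Fin (2 * n) :=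
  (Equiv.boolProdEquivSum _).trans <| (Equiv.sumCongr Fin.revPerm (Equiv.refl _)).trans <|
    finSumFinEquiv.trans (finCongr (two_mul n).symm)

@[simp] lemma mirrorIdx_val (s : Bool) (j : Fin n) :
    (mirrorIdx (s, j) : ℕ) = cond s (n + j) (n - 1 - j) := by
  cases s <;> simp [mirrorIdx, add_comm]
  omega

def mirrorNode : Bool × TLNode n n ≃ TLNode (2 * n) (2 * n) :=
  (Equiv.prodSumDistrib _ _ _).trans (Equiv.sumCongr mirrorIdx mirrorIdx)

@[simp] lemma mirrorNode_inl (s : Bool) (j : Fin n) :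
    mirrorNode (s, .inl j) = .inl (mirrorIdx (s, j)) := rfl

@[simp] lemma mirrorNode_inr (s : Bool) (j : Fin n) :
    mirrorNode (s, .inr j) = .inr (mirrorIdx (s, j)) := rfl

/-- The unfolding of a blob diagram in folded coordinates: an unblobbed line is doubled into two
mirror-image lines, a blobbed line is joined to its own mirror image. -/
def mirrorPairing (D : BlobDiagram n) (u : Bool × TLNode n n) : Bool × TLNode n n :=
  if D.deco u.2 then (!u.1, u.2) else (u.1, D.pair u.2)

def unfold (π : Bool × TLNode n n → Bool × TLNode n n) :
    TLNode (2 * n) (2 * n) → TLNode (2 * n) (2 * n) :=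
  mirrorNode ∘ π ∘ mirrorNode.symm

lemma unfold_apply_mirrorNode (π : Bool × TLNode n n → Bool × TLNode n n)
    (u : Bool × TLNode n n) : unfold π (mirrorNode u) = mirrorNode (π u) := by
  simp only [unfold, comp_apply, Equiv.symm_apply_apply]

lemma addCap_unfold (P Q : Bool × TLNode n n) (π : Bool × TLNode n n → Bool × TLNode n n) :
    addCap (mirrorNode P) (mirrorNode Q) (unfold π) = unfold (addCap P Q π) :=
  addCap_conj mirrorNode

lemma isPairing_mirrorPairing (D : BlobDiagram n) : IsPairing (mirrorPairing D) := by
  refine ⟨fun ⟨s, b⟩ => ?_, fun ⟨s, b⟩ => ?_⟩ <;> by_cases h : D.deco b <;>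
    simp [mirrorPairing, h, D.deco_pair, D.involutive b, D.fixedFree b]

lemma IsId.pair_inr {E : TLDiagram n n} (h : IsId E) (j : Fin n) : E.pair (.inr j) = .inl j := by
  rw [← h j, E.involutive]

lemma unfold_mirrorPairing_of_isIdB {B : BlobDiagram n} (hB : IsIdB B) :
    unfold (mirrorPairing B) = Sum.swap := by
  funext u
  obtain ⟨⟨s, b | b⟩, rfl⟩ := mirrorNode.surjective u <;>
    rw [unfold_apply_mirrorNode] <;> simp [mirrorPairing, hB.2, hB.1 b, hB.1.pair_inr b]

end Mirror

section MirrorCaps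

variable {n : ℕ} {D E : BlobDiagram n}

/-- The cap across the mirror joins the two lifts of the line of `D` through `t`, which becomes
the blobbed line of `E`. -/
lemma addCap_mirrorPairing_of_blob {t : TLNode n n} (hdt : D.deco t = false)
    (hEp : E.pair = D.pair)
    (hEd : ∀ u, E.deco u = true ↔ D.deco u = true ∨ u = t ∨ u = D.pair t) :
    addCap (false, t) (true, t) (mirrorPairing D) = mirrorPairing E := by
  funext ⟨s, b⟩
  have hEd' : ∀ u, E.deco u = (D.deco u || decide (u = t) || decide (u = D.pair t)) := by
    intro u; rw [Bool.eq_iff_iff, hEd]; simp [or_assoc]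
  have hfix := D.fixedFree t
  simp only [addCap, mirrorPairing, hEd', hEp]
  clear hEd hEd' hEp
  cases s <;> split_ifs <;> simp_all [D.involutive.eq_iff]

/-- Each cap joins the lifts, on its own side, of the lines of `D` through `t₁` and `t₂`; a
blobbed one of these lines already joins the two sides, and the composite line is blobbed. -/
lemma addCap_addCap_mirrorPairing {t₁ t₂ : TLNode n n} (h12 : t₁ ≠ t₂) (hnp : D.pair t₁ ≠ t₂)
    (hEp : E.pair = addCap t₁ t₂ D.pair)
    (hEd : ∀ u, E.deco u = (decide (u ≠ t₁ ∧ u ≠ t₂) && (D.deco u || D.deco (E.pair u)))) :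
    addCap (false, t₂) (false, t₁) (addCap (true, t₁) (true, t₂) (mirrorPairing D)) =
      mirrorPairing E := by
  funext ⟨s, b⟩
  have hfix₁ := D.fixedFree t₁
  have hfix₂ := D.fixedFree t₂
  have hqp : D.pair t₂ ≠ t₁ := D.isPairing.apply_right_ne hnp
  have hdp := D.deco_pair
  have hE₁ : E.pair t₁ = t₂ := by simp [hEp, addCap]
  have hE₂ : E.pair t₂ = t₁ := by simp [hEp, addCap, h12.symm]
  rcases eq_or_ne b t₁ with rfl | hb₁
  · cases s <;> simp [addCap, mirrorPairing, hEd, hE₁, h12, h12.symm]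
  rcases eq_or_ne b t₂ with rfl | hb₂
  · cases s <;> simp [addCap, mirrorPairing, hEd, hE₂, h12, h12.symm]
  by_cases hdb : D.deco b
  · have hEb : E.deco b := by simp [hEd, hb₁, hb₂, hdb]
    cases s <;> simp [addCap, mirrorPairing, hdb, hEb, hb₁, hb₂]
  rcases eq_or_ne (D.pair b) t₁ with hpb | hp₁
  · obtain rfl : b = D.pair t₁ := by rw [← hpb, D.involutive]
    rw [hdp] at hdb
    have hEb : E.pair (D.pair t₁) = D.pair t₂ := by simp [hEp, addCap, hb₁, hb₂, D.involutive t₁]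
    cases s <;> cases hd₂ : D.deco t₂ <;>
      simp [addCap, mirrorPairing, hEd, hEb, hb₁, hb₂, hdb, hd₂, hdp, D.involutive _, hfix₂, hqp,
        h12, h12.symm]
  rcases eq_or_ne (D.pair b) t₂ with hpb | hp₂
  · obtain rfl : b = D.pair t₂ := by rw [← hpb, D.involutive]
    rw [hdp] at hdb
    have hEb : E.pair (D.pair t₂) = D.pair t₁ := by
      simp [hEp, addCap, hb₁, hb₂, D.involutive t₂, h12.symm]
    cases s <;> cases hd₁ : D.deco t₁ <;>
      simp [addCap, mirrorPairing, hEd, hEb, hb₁, hb₂, hdb, hd₁, hdp, D.involutive _, hfix₁, hnp,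
        h12, h12.symm]
  have hEb : E.deco b = false := by simp [hEd, hb₁, hb₂, hdb, hEp, addCap, hp₁, hp₂, hdp]
  cases s <;> simp [addCap, mirrorPairing, hdb, hEb, hb₁, hb₂, hp₁, hp₂, hEp]

lemma mirrorPairing_ne_of_pair_ne {t₁ t₂ : TLNode n n} (hnp : D.pair t₁ ≠ t₂) (s : Bool) :
    mirrorPairing D (s, t₁) ≠ (s, t₂) := by
  by_cases h : D.deco t₁ <;> simp [mirrorPairing, h, hnp]

lemma addCap_mirrorPairing_ne {t₁ t₂ : TLNode n n} (h12 : t₁ ≠ t₂) (hnp : D.pair t₁ ≠ t₂)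
    (hnd : ¬(D.deco t₁ = true ∧ D.deco t₂ = true)) :
    addCap (true, t₁) (true, t₂) (mirrorPairing D) (false, t₂) ≠ (false, t₁) := by
  have hqp : D.pair t₂ ≠ t₁ := D.isPairing.apply_right_ne hnp
  by_cases h₂ : D.deco t₂
  · have h₁ : D.deco t₁ = false := by simpa [h₂] using hnd
    simp [addCap, mirrorPairing, h₁, h₂, h12.symm]
  · simp [addCap, mirrorPairing, h₂, hqp]

end MirrorCaps

section Concatenation

variable {n m l : ℕ} {B : TLDiagram n m} {D : TLDiagram m l}

instance : Std.Symm (Linked B D) where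
  symm := by
    rintro x y (⟨a, rfl, rfl⟩ | ⟨a, rfl, rfl⟩)
    · exact Or.inl ⟨B.pair a, rfl, by rw [B.involutive]⟩
    · exact Or.inr ⟨D.pair a, rfl, by rw [D.involutive]⟩

lemma Joined.symm {x y : TriNode n m l} (h : Joined B D x y) : Joined B D y x :=
  Std.Symm.symm (r := Relation.ReflTransGen (Linked B D)) _ _ h

lemma mk_eq_iff_joined {x y : TriNode n m l} :
    Quot.mk (Linked B D) x = Quot.mk _ y ↔ Joined B D x y := by
  rw [Joined, ← Relation.EqvGen.eqvGen_eq_reflTransGen]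
  exact ⟨Quot.eqvGen_exact, Quot.eqvGen_sound⟩

lemma Joined.mem_of_closed {S : Set (TriNode n m l)}
    (hS : ∀ x y, Linked B D x y → x ∈ S → y ∈ S) {x z : TriNode n m l} (h : Joined B D x z)
    (hx : x ∈ S) : z ∈ S := by
  induction h with
  | refl => exact hx
  | tail _ hyz ih => exact hS _ _ hyz ih

lemma joined_up (a : TLNode n m) : Joined B D (inUp a) (inUp (B.pair a)) :=
  .single (Or.inl ⟨a, rfl, rfl⟩)

lemma joined_down (a : TLNode m l) : Joined B D (inDown a) (inDown (D.pair a)) :=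
  .single (Or.inr ⟨a, rfl, rfl⟩)

lemma mk_inDown_eq_of_line {a r : TLNode m l} (h : r = a ∨ r = D.pair a) :
    Quot.mk (Linked B D) (inDown r) = Quot.mk _ (inDown a) := by
  obtain rfl | rfl := h
  exacts [rfl, mk_eq_iff_joined.mpr (joined_down a).symm]

end Concatenation

section SquareConcatenation

variable {n : ℕ} {B D : TLDiagram n n}

/-- The node of the lower diagram below a node of the concatenation; the upper diagram's nodes
are identified with the middle nodes underneath them. -/
def lowerNode : TriNode n n n → TLNode n n
  | .inl k => .inl k
  | .inr (.inl k) => .inl k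
  | .inr (.inr k) => .inr k

@[simp] lemma lowerNode_inOut (u : TLNode n n) : lowerNode (inOut (m := n) u) = u := by
  cases u <;> rfl

@[simp] lemma lowerNode_inDown (a : TLNode n n) : lowerNode (inDown (n := n) a) = a := by
  cases a <;> rfl

lemma Joined.lowerNode_mem {S : Set (TLNode n n)}
    (hB : ∀ a, lowerNode (inUp a) ∈ S → lowerNode (inUp (B.pair a)) ∈ S)
    (hD : ∀ a ∈ S, D.pair a ∈ S) {x z : TriNode n n n} (h : Joined B D x z)
    (hx : lowerNode x ∈ S) : lowerNode z ∈ S := by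
  refine h.mem_of_closed (S := {z | lowerNode z ∈ S}) ?_ hx
  rintro _ _ (⟨a, rfl, rfl⟩ | ⟨a, rfl, rfl⟩) h
  exacts [hB a h, by simpa using hD a (by simpa using h)]

end SquareConcatenation

section Counting

variable {n : ℕ} {B D : BlobDiagram n}

lemma zetaPlain_pos_or_zetaBlob_pos {c : Quot (Linked B.toTLDiagram D.toTLDiagram)}
    (hc : ∀ v, Quot.mk _ v = c → IsMiddle v) : 0 < zetaPlain B D ∨ 0 < zetaBlob B D := by
  by_cases h : ∃ v, Quot.mk _ v = c ∧ DecoratedAt B D v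
  · exact .inr (Nat.card_pos_iff.mpr ⟨⟨⟨c, hc, h⟩⟩, inferInstance⟩)
  · simp only [not_exists, not_and] at h
    exact .inl (Nat.card_pos_iff.mpr ⟨⟨⟨c, hc, fun v hv => h v hv⟩⟩, inferInstance⟩)

/-- One endpoint of each decorated line. -/
def decoReps (D : BlobDiagram n) : Finset (TLNode n n) :=
  Finset.univ.filter fun v => D.deco v = true ∧ nodePos v < nodePos (D.pair v)

lemma decoLines_eq_card (D : BlobDiagram n) : decoLines D = (decoReps D).card := rfl

lemma nodePos_injective {m : ℕ} : Injective (nodePos (n := n) (m := m)) := by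
  rintro (a | a) (b | b) h <;> simp only [nodePos] at h <;> have := a.isLt <;> have := b.isLt <;>
    first | (congr 1; ext; omega) | omega

lemma exists_mem_decoReps {a : TLNode n n} (hd : D.deco a = true) :
    ∃ r ∈ decoReps D, r = a ∨ r = D.pair a := by
  have hne : nodePos a ≠ nodePos (D.pair a) := fun h => D.fixedFree a (nodePos_injective h).symm
  rcases hne.lt_or_gt with h | h
  · exact ⟨a, by simp [decoReps, hd, h], .inl rfl⟩
  · exact ⟨D.pair a, by simp [decoReps, D.deco_pair, hd, D.involutive a, h], .inr rfl⟩

lemma exists_mem_decoReps_mk (B' : TLDiagram n n) {a : TLNode n n} (hd : D.deco a = true) :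
    ∃ r ∈ decoReps D, Quot.mk (Linked B' D.toTLDiagram) (inDown r) = Quot.mk _ (inDown a) := by
  obtain ⟨r, hr, h⟩ := exists_mem_decoReps hd
  exact ⟨r, hr, mk_inDown_eq_of_line h⟩

lemma blobbedComps_le_card (S : Finset (TLNode n n))
    (hS : ∀ v, DecoratedAt B D v →
      ∃ a ∈ S, Quot.mk (Linked B.toTLDiagram D.toTLDiagram) (inDown a) = Quot.mk _ v) :
    blobbedComps B D ≤ S.card := by
  have key : ∀ c : {c : Quot (Linked B.toTLDiagram D.toTLDiagram) //
      ∃ v, Quot.mk _ v = c ∧ DecoratedAt B D v}, ∃ a : S, Quot.mk _ (inDown a.1) = c.1 := by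
    rintro ⟨c, v, rfl, hv⟩
    obtain ⟨a, ha, h⟩ := hS v hv
    exact ⟨⟨a, ha⟩, h⟩
  choose f hf using key
  calc blobbedComps B D ≤ Nat.card S :=
        Nat.card_le_card_of_injective f fun c c' h => Subtype.ext ((hf c).symm.trans (h ▸ hf c'))
    _ = S.card := by simp

end Counting

section GeneratorE

variable {n : ℕ} {B D E : BlobDiagram n}

lemma joined_inOut_inDown_of_isId (hid : IsId B.toTLDiagram) (u : TLNode n n) :
    Joined B.toTLDiagram D.toTLDiagram (inOut u) (inDown u) := by
  rcases u with k | k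
  · have := joined_up (B := B.toTLDiagram) (D := D.toTLDiagram) (.inl k)
    rwa [hid k] at this
  · exact .refl

lemma lowerNode_inUp_pair_of_isId (hid : IsId B.toTLDiagram) (a : TLNode n n) :
    lowerNode (inUp (l := n) (B.pair a)) = lowerNode (inUp (l := n) a) := by
  rcases a with k | k <;> simp [hid k, hid.pair_inr k, inUp, lowerNode]

lemma IsBlobComposite.pair_of_isEB (hB : IsEB B) (hc : IsBlobComposite B D E) :
    E.pair = D.pair := by
  funext u
  refine (hc.1 u (D.pair u)).mpr ⟨(D.fixedFree u).symm, ?_⟩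
  exact ((joined_inOut_inDown_of_isId hB.1 u).trans (joined_down u)).trans
    (joined_inOut_inDown_of_isId hB.1 _).symm

lemma IsBlobComposite.deco_of_isEB (hB : IsEB B) (hc : IsBlobComposite B D E) (hn : 0 < n)
    (u : TLNode n n) :
    E.deco u = true ↔ D.deco u = true ∨ u = .inl ⟨0, hn⟩ ∨ u = D.pair (.inl ⟨0, hn⟩) := by
  obtain ⟨hid, _, hdec⟩ := hB
  have hdec₀ : ∀ a, B.deco a = true ↔ a = .inl ⟨0, hn⟩ ∨ a = .inr ⟨0, hn⟩ := hdec
  have hu := joined_inOut_inDown_of_isId (D := D) hid u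
  have hreach : ∀ w, Joined B.toTLDiagram D.toTLDiagram (inOut u) w →
      lowerNode w = u ∨ lowerNode w = D.pair u := fun w hw =>
    hw.lowerNode_mem (S := {u, D.pair u}) (fun a h => by rwa [lowerNode_inUp_pair_of_isId hid])
      (by rintro a (rfl | rfl) <;> simp [D.involutive _]) (by simp)
  rw [hc.2 u]
  constructor
  · rintro ⟨w, hw, ⟨a, rfl, ha⟩ | ⟨a, rfl, ha⟩⟩
    · have h0 : lowerNode (inUp (l := n) a) = .inl ⟨0, hn⟩ := by
        rcases (hdec₀ a).mp ha with rfl | rfl <;> rfl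
      rcases hreach _ hw with h | h <;> rw [h0] at h
      · exact .inr (.inl h.symm)
      · exact .inr (.inr (by rw [h, D.involutive]))
    · rcases hreach _ hw with h | h <;> simp only [lowerNode_inDown] at h <;> subst h
      · exact .inl ha
      · exact .inl (by rwa [D.deco_pair] at ha)
  · rintro (h | rfl | rfl)
    · exact ⟨_, hu, .inr ⟨u, rfl, h⟩⟩
    · exact ⟨_, .refl, .inl ⟨.inl ⟨0, hn⟩, rfl, (hdec₀ _).mpr (.inl rfl)⟩⟩
    · refine ⟨_, hu.trans (joined_down _), .inl ⟨.inr ⟨0, hn⟩, ?_, (hdec₀ _).mpr (.inr rfl)⟩⟩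
      simp [D.involutive _, inUp, inDown]

lemma decoLines_of_isEB (hB : IsEB B) : decoLines B = 1 := by
  obtain ⟨hid, hn, hdec⟩ := hB
  rw [decoLines_eq_card, Finset.card_eq_one]
  refine ⟨.inl ⟨0, hn⟩, Finset.ext fun v => ?_⟩
  simp only [decoReps, Finset.mem_filter, Finset.mem_univ, true_and, Finset.mem_singleton, hdec]
  constructor
  · rintro ⟨rfl | rfl, h⟩
    · rfl
    · simp [hid.pair_inr, nodePos] at h
  · rintro rfl
    simp [hid _, nodePos]
    omega

/-- Otherwise the blob of `e` lies in the same component as a blobbed line of `D`, so there are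
at most `decoLines D` blobbed components for `decoLines D + 1` blobs. -/
lemma deco_eq_false_of_isEB (hB : IsEB B) (hδ : deltaExp B D = 0) (hn : 0 < n) :
    D.deco (.inl ⟨0, hn⟩) = false := by
  by_contra hd
  rw [Bool.not_eq_false] at hd
  have hle : blobbedComps B D ≤ decoLines D := by
    refine blobbedComps_le_card _ fun v hv => ?_
    rcases hv with ⟨a, rfl, ha⟩ | ⟨a, rfl, ha⟩
    · obtain ⟨r, hr, h⟩ := exists_mem_decoReps_mk B.toTLDiagram hd
      refine ⟨r, hr, h.trans ?_⟩
      rcases (hB.2.choose_spec a).mp ha with rfl | rfl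
      · exact (Quot.sound (.inl ⟨.inl ⟨0, hn⟩, rfl, by rw [hB.1]; rfl⟩)).symm
      · rfl
    · exact exists_mem_decoReps_mk B.toTLDiagram ha
  unfold deltaExp at hδ
  rw [decoLines_of_isEB hB] at hδ
  omega

end GeneratorE

section GeneratorU

variable {n : ℕ} {U D E : BlobDiagram n} {a₁ a₂ : Fin n}

lemma IsU.exists_pair_eq_capPairing {i : ℕ} {E : TLDiagram n n} (h : IsU i E) :
    ∃ a₁ a₂ : Fin n, (a₁ : ℕ) + 1 = i ∧ (a₂ : ℕ) = i ∧ E.pair = capPairing a₁ a₂ := by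
  obtain ⟨hi, hin, hl, hr, hv⟩ := h
  refine ⟨⟨i - 1, by omega⟩, ⟨i, hin⟩, by simp; omega, rfl, funext fun u => ?_⟩
  have hne : (⟨i - 1, by omega⟩ : Fin n) ≠ ⟨i, hin⟩ := by simp; omega
  rcases u with k | k <;> by_cases h1 : k = ⟨i - 1, by omega⟩
  · simp [capPairing, h1, hl]
  · by_cases h2 : k = ⟨i, hin⟩
    · simp [capPairing, h2, hne.symm, ← hl, E.involutive _]
    have hk := hv k (by simpa [Fin.ext_iff] using h1) (by simpa [Fin.ext_iff] using h2)
    simp [capPairing, h1, h2, hk]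
  · simp [capPairing, h1, hr]
  · by_cases h2 : k = ⟨i, hin⟩
    · simp [capPairing, h2, hne.symm, ← hr, E.involutive _]
    have hk := hv k (by simpa [Fin.ext_iff] using h1) (by simpa [Fin.ext_iff] using h2)
    simp [capPairing, h1, h2, ← hk, E.involutive _]

lemma lowerNode_inUp_capPairing (b : TLNode n n) :
    lowerNode (inUp (l := n) (capPairing a₁ a₂ b)) =
      Equiv.swap (.inl a₁) (.inl a₂) (lowerNode (inUp (l := n) b)) := by
  rcases b with k | k <;> by_cases h1 : k = a₁ <;> by_cases h2 : k = a₂ <;> subst_vars <;>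
    simp [capPairing, inUp, lowerNode, Equiv.swap_apply_def, *]

lemma joined_inOut_inDown_of_cap (hU : U.pair = capPairing a₁ a₂) {u : TLNode n n}
    (h₁ : u ≠ .inl a₁) (h₂ : u ≠ .inl a₂) :
    Joined U.toTLDiagram D.toTLDiagram (inOut u) (inDown u) := by
  rcases u with k | k
  · have := joined_up (B := U.toTLDiagram) (D := D.toTLDiagram) (.inl k)
    rwa [hU, capPairing, if_neg (by simpa using h₁), if_neg (by simpa using h₂)] at this
  · exact .refl

lemma joined_inOut_cap (hU : U.pair = capPairing a₁ a₂) :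
    Joined U.toTLDiagram D.toTLDiagram (inOut (.inl a₁)) (inOut (.inl a₂)) := by
  have := joined_up (B := U.toTLDiagram) (D := D.toTLDiagram) (.inl a₁)
  rwa [hU, capPairing, if_pos rfl] at this

lemma joined_inDown_cap (hU : U.pair = capPairing a₁ a₂) :
    Joined U.toTLDiagram D.toTLDiagram (inDown (.inl a₁)) (inDown (.inl a₂)) := by
  have := joined_up (B := U.toTLDiagram) (D := D.toTLDiagram) (.inr a₁)
  rwa [hU, capPairing, if_pos rfl] at this

lemma IsBlobComposite.pair_of_cap (hU : U.pair = capPairing a₁ a₂) (h12 : a₁ ≠ a₂)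
    (hc : IsBlobComposite U D E) (hnp : D.pair (.inl a₁) ≠ .inl a₂) :
    E.pair = addCap (.inl a₁) (.inl a₂) D.pair := by
  have ht : (.inl a₁ : TLNode n n) ≠ .inl a₂ := by simpa using h12
  have hψ := isPairing_addCap D.isPairing ht hnp
  funext u
  refine (hc.1 u _).mpr ⟨(hψ.2 u).symm, ?_⟩
  by_cases h₁ : u = .inl a₁
  · subst h₁; simpa using joined_inOut_cap hU
  by_cases h₂ : u = .inl a₂
  · subst h₂; simpa [addCap_apply_right ht] using (joined_inOut_cap hU).symm
  refine ((joined_inOut_inDown_of_cap hU h₁ h₂).trans ?_).trans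
    (joined_inOut_inDown_of_cap hU (addCap_apply_ne_left D.isPairing ht hnp h₂)
      (addCap_apply_ne_right D.isPairing ht hnp h₁)).symm
  by_cases hp₁ : D.pair u = .inl a₁
  · obtain rfl : u = D.pair (.inl a₁) := by rw [← hp₁, D.involutive]
    rw [addCap_apply_pair_left D.isPairing hnp]
    exact ((joined_down _).trans (by rw [D.involutive]; exact joined_inDown_cap hU)).trans
      (joined_down _)
  by_cases hp₂ : D.pair u = .inl a₂
  · obtain rfl : u = D.pair (.inl a₂) := by rw [← hp₂, D.involutive]
    rw [addCap_apply_pair_right D.isPairing ht hnp]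
    exact ((joined_down _).trans (by rw [D.involutive]; exact (joined_inDown_cap hU).symm)).trans
      (joined_down _)
  rw [addCap_apply_of_ne h₁ h₂ hp₁ hp₂]
  exact joined_down u

lemma IsBlobComposite.deco_cap_eq_false (hU : U.pair = capPairing a₁ a₂)
    (hdU : ∀ v, U.deco v = false) (h12 : a₁ ≠ a₂) (hc : IsBlobComposite U D E) :
    E.deco (.inl a₁) = false := by
  rw [← Bool.not_eq_true, hc.2]
  rintro ⟨w, hw, hd⟩
  have hS := hw.mem_of_closed (S := {inOut (.inl a₁), inOut (.inl a₂)}) ?_ (by simp)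
  · rcases hd with ⟨a, -, ha⟩ | ⟨a, rfl, -⟩
    · simp [hdU] at ha
    · rcases a with k | k <;> simp [inDown, inOut] at hS
  rintro _ _ (⟨b, rfl, rfl⟩ | ⟨b, rfl, rfl⟩) hx
  · rcases b with k | k <;> simp only [inUp, inOut, Set.mem_insert_iff, Set.mem_singleton_iff,
      Sum.inl.injEq, reduceCtorEq, or_false] at hx
    obtain rfl | rfl := hx <;> simp [hU, capPairing, inUp, inOut, h12, h12.symm]
  · rcases b with k | k <;> simp [inDown, inOut] at hx

lemma IsBlobComposite.deco_of_cap (hU : U.pair = capPairing a₁ a₂)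
    (hdU : ∀ v, U.deco v = false) (h12 : a₁ ≠ a₂) (hc : IsBlobComposite U D E)
    (hnp : D.pair (.inl a₁) ≠ .inl a₂) {u : TLNode n n} (h₁ : u ≠ .inl a₁) (h₂ : u ≠ .inl a₂) :
    E.deco u = true ↔ D.deco u = true ∨ D.deco (E.pair u) = true := by
  have ht : (.inl a₁ : TLNode n n) ≠ .inl a₂ := by simpa using h12
  have hEp := hc.pair_of_cap hU h12 hnp
  have hE₁ : E.pair u ≠ .inl a₁ := hEp ▸ addCap_apply_ne_left D.isPairing ht hnp h₂
  have hE₂ : E.pair u ≠ .inl a₂ := hEp ▸ addCap_apply_ne_right D.isPairing ht hnp h₁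
  rw [hc.2 u]
  constructor
  · rintro ⟨w, hw, ⟨a, -, ha⟩ | ⟨a, rfl, ha⟩⟩
    · simp [hdU] at ha
    have hlines := left_mem_lines_addCap_iff D.isPairing ht hnp h₁ h₂
    rw [← hEp] at hlines
    -- the component of `u` meets the middle row only in the lines of `D` through `u` and `E.pair u`
    have := hw.lowerNode_mem (S := {u, D.pair u, E.pair u, D.pair (E.pair u)}) (fun b hb => ?_)
      (by rintro a (rfl | rfl | rfl | rfl) <;> simp [D.involutive _]) (by simp)
    · simp only [lowerNode_inDown, Set.mem_insert_iff, Set.mem_singleton_iff] at this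
      rcases this with rfl | rfl | rfl | rfl <;> simp_all [D.deco_pair]
    rw [hU, lowerNode_inUp_capPairing]
    by_cases hb₁ : lowerNode (inUp (l := n) b) = .inl a₁
    · rw [hb₁, Equiv.swap_apply_left]; exact hlines.mp (hb₁ ▸ hb)
    by_cases hb₂ : lowerNode (inUp (l := n) b) = .inl a₂
    · rw [hb₂, Equiv.swap_apply_right]; exact hlines.mpr (hb₂ ▸ hb)
    rwa [Equiv.swap_apply_of_ne_of_ne hb₁ hb₂]
  · rintro (h | h)
    · exact ⟨_, joined_inOut_inDown_of_cap hU h₁ h₂, .inr ⟨u, rfl, h⟩⟩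
    · exact ⟨_, ((hc.1 u _).mp rfl).2.trans (joined_inOut_inDown_of_cap hU hE₁ hE₂),
        .inr ⟨_, rfl, h⟩⟩

lemma IsBlobComposite.deco_eq_of_cap (hU : U.pair = capPairing a₁ a₂)
    (hdU : ∀ v, U.deco v = false) (h12 : a₁ ≠ a₂) (hc : IsBlobComposite U D E)
    (hnp : D.pair (.inl a₁) ≠ .inl a₂) (u : TLNode n n) :
    E.deco u = (decide (u ≠ .inl a₁ ∧ u ≠ .inl a₂) && (D.deco u || D.deco (E.pair u))) := by
  by_cases h₁ : u = .inl a₁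
  · simp [h₁, hc.deco_cap_eq_false hU hdU h12]
  by_cases h₂ : u = .inl a₂
  · have : E.pair (.inl a₁) = .inl a₂ := by simp [hc.pair_of_cap hU h12 hnp]
    simp [h₂, ← this, E.deco_pair, hc.deco_cap_eq_false hU hdU h12]
  rw [Bool.eq_iff_iff, hc.deco_of_cap hU hdU h12 hnp h₁ h₂]
  simp [h₁, h₂]

/-- Otherwise the cap of `𝒰` and the line of `D` close a loop through the middle nodes. -/
lemma pair_ne_of_zeta_eq_zero (hU : U.pair = capPairing a₁ a₂) (h12 : a₁ ≠ a₂)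
    (hζ : zetaPlain U D = 0) (hζ' : zetaBlob U D = 0) : D.pair (.inl a₁) ≠ .inl a₂ := by
  intro hp
  have hp' : D.pair (.inl a₂) = .inl a₁ := by rw [← hp, D.involutive]
  have hmid : ∀ v, Quot.mk (Linked U.toTLDiagram D.toTLDiagram) v =
      Quot.mk _ (inDown (.inl a₁)) → IsMiddle v := by
    intro v hv
    have := (mk_eq_iff_joined.mp hv).symm.mem_of_closed
      (S := {inDown (.inl a₁), inDown (.inl a₂)}) ?_ (by simp)
    · obtain rfl | rfl := this <;> trivial
    rintro _ _ (⟨b, rfl, rfl⟩ | ⟨b, rfl, rfl⟩) hx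
    · rcases b with k | k <;> simp [inUp, inDown] at hx ⊢
      obtain rfl | rfl := hx <;> simp [hU, capPairing, h12, h12.symm]
    · rcases b with k | k <;> simp [inDown] at hx ⊢
      obtain rfl | rfl := hx <;> simp [hp, hp']
  have := zetaPlain_pos_or_zetaBlob_pos hmid
  omega

/-- Otherwise the two blobbed lines of `D` at the cap lie in one component, so there are fewer
blobbed components than blobs. -/
lemma not_deco_and_deco_of_deltaExp_eq_zero (hU : U.pair = capPairing a₁ a₂)
    (hdU : ∀ v, U.deco v = false) (h12 : a₁ ≠ a₂) (hnp : D.pair (.inl a₁) ≠ .inl a₂)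
    (hδ : deltaExp U D = 0) : ¬(D.deco (.inl a₁) = true ∧ D.deco (.inl a₂) = true) := by
  rintro ⟨hd₁, hd₂⟩
  obtain ⟨r₁, hr₁, hl₁⟩ := exists_mem_decoReps hd₁
  obtain ⟨r₂, hr₂, hl₂⟩ := exists_mem_decoReps hd₂
  have hr12 : r₁ ≠ r₂ := by
    have := D.isPairing.apply_right_ne hnp
    obtain rfl | rfl := hl₁ <;> obtain rfl | rfl := hl₂ <;>
      simp [h12, hnp, this.symm, D.involutive.injective.eq_iff]
  have hle : blobbedComps U D ≤ ((decoReps D).erase r₂).card := by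
    refine blobbedComps_le_card _ fun v hv => ?_
    rcases hv with ⟨a, -, ha⟩ | ⟨a, rfl, ha⟩
    · simp [hdU] at ha
    obtain ⟨r, hr, hrl⟩ := exists_mem_decoReps ha
    by_cases hrr : r = r₂
    · subst hrr
      refine ⟨r₁, Finset.mem_erase.mpr ⟨hr12, hr₁⟩, ?_⟩
      rw [mk_inDown_eq_of_line hl₁, mk_eq_iff_joined.mpr (joined_inDown_cap hU),
        ← mk_inDown_eq_of_line hl₂, mk_inDown_eq_of_line hrl]
    · exact ⟨r, Finset.mem_erase.mpr ⟨hrr, hr⟩, mk_inDown_eq_of_line hrl⟩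
  have hpos : 0 < (decoReps D).card := Finset.card_pos.mpr ⟨r₂, hr₂⟩
  rw [Finset.card_erase_of_mem hr₂] at hle
  have hU0 : decoLines U = 0 := by simp [decoLines, hdU]
  unfold deltaExp at hδ
  rw [hU0, decoLines_eq_card] at hδ
  omega

end GeneratorU

section Assembly

variable {n : ℕ} {K : Type*} [CommRing K] [IsDomain K]
  {G M : Matrix (Fin (2 * n) → Fin 2) (Fin (2 * n) → Fin 2) K}

theorem HasMask.capPairing_mul_unfold {π : Bool × TLNode n n → Bool × TLNode n n}
    (hπ : IsPairing π) {s s' : Bool} {j j' : Fin n} (hne : (s, j) ≠ (s', j'))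
    (hcap : π (s, .inl j) ≠ (s', .inl j'))
    (hG : HasMask G (capPairing (mirrorIdx (s, j)) (mirrorIdx (s', j'))))
    (hM : HasMask M (unfold π)) :
    HasMask (G * M) (unfold (addCap (s, .inl j) (s', .inl j') π)) := by
  rw [← addCap_unfold]
  refine hG.capPairing_mul (hπ.conj mirrorNode) (mirrorIdx.injective.ne hne) ?_ hM
  change unfold π (mirrorNode (s, .inl j)) ≠ mirrorNode (s', .inl j')
  rw [unfold_apply_mirrorNode]
  exact mirrorNode.injective.ne hcap

/-- `M` is mask equivalent to `R(f(g))` for the letter `g`, with some parameters for `x`. -/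
def IsLetterMatrix (n g : ℕ) (M : Matrix (Fin (2 * n) → Fin 2) (Fin (2 * n) → Fin 2) K) :
    Prop :=
  if g = 0 then ∃ r : Kˣ, MaskEquiv M (RU r (2 * n) n)
  else ∃ (s t : Kˣ) (X Y : Matrix (Fin (2 * n) → Fin 2) (Fin (2 * n) → Fin 2) K),
    M = X * Y ∧ MaskEquiv X (RU s (2 * n) (n - g)) ∧ MaskEquiv Y (RU t (2 * n) (n + g))

variable {B D E : BlobDiagram n}

lemma HasMask.mul_of_isEB (hB : IsEB B) (hc : IsBlobComposite B D E) (hδ : deltaExp B D = 0)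
    (hG : IsLetterMatrix n 0 G) (hM : HasMask M (unfold (mirrorPairing D))) :
    HasMask (G * M) (unfold (mirrorPairing E)) := by
  obtain ⟨r, hr⟩ : ∃ r : Kˣ, MaskEquiv G (RU r (2 * n) n) := by simpa [IsLetterMatrix] using hG
  have hn : 0 < n := hB.2.fst
  have hd₀ := deco_eq_false_of_isEB hB hδ hn
  have hG' := hr.hasMask (hasMask_RU r (p := mirrorIdx (false, ⟨0, hn⟩))
    (q := mirrorIdx (true, ⟨0, hn⟩)) (by simp; omega) (by simp))
  have := hG'.capPairing_mul_unfold (isPairing_mirrorPairing D) (by simp)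
    (by simp [mirrorPairing, hd₀]) hM
  rwa [addCap_mirrorPairing_of_blob hd₀ (hc.pair_of_isEB hB) (hc.deco_of_isEB hB hn)] at this

lemma HasMask.mul_of_isUB {i : ℕ} (hU : IsUB i B) (hc : IsBlobComposite B D E)
    (hζ : zetaPlain B D = 0) (hζ' : zetaBlob B D = 0) (hδ : deltaExp B D = 0)
    (hG : IsLetterMatrix n i G) (hM : HasMask M (unfold (mirrorPairing D))) :
    HasMask (G * M) (unfold (mirrorPairing E)) := by
  obtain ⟨a₁, a₂, ha₁, ha₂, hp⟩ := hU.1.exists_pair_eq_capPairing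
  obtain ⟨hi, hin, -⟩ := hU.1
  obtain ⟨s, t, X, Y, rfl, hX, hY⟩ :
      ∃ (s t : Kˣ) (X Y : Matrix (Fin (2 * n) → Fin 2) (Fin (2 * n) → Fin 2) K),
        G = X * Y ∧ MaskEquiv X (RU s (2 * n) (n - i)) ∧ MaskEquiv Y (RU t (2 * n) (n + i)) := by
    simpa [IsLetterMatrix, show i ≠ 0 by omega] using hG
  have h12 : a₁ ≠ a₂ := fun h => by rw [h] at ha₁; omega
  have ht : (.inl a₁ : TLNode n n) ≠ .inl a₂ := by simpa using h12
  have hnp := pair_ne_of_zeta_eq_zero hp h12 hζ hζ'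
  have hnd := not_deco_and_deco_of_deltaExp_eq_zero hp hU.2 h12 hnp hδ
  have hEp := hc.pair_of_cap hp h12 hnp
  have hEd := hc.deco_eq_of_cap hp hU.2 h12 hnp
  have hY' := hY.hasMask (hasMask_RU t (p := mirrorIdx (true, a₁)) (q := mirrorIdx (true, a₂))
    (by simp; omega) (by simp; omega))
  have hX' := hX.hasMask (hasMask_RU s (p := mirrorIdx (false, a₂)) (q := mirrorIdx (false, a₁))
    (by simp; omega) (by simp; omega))
  have h₁ := hY'.capPairing_mul_unfold (isPairing_mirrorPairing D) (by simpa using h12)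
    (mirrorPairing_ne_of_pair_ne hnp true) hM
  have h₂ := hX'.capPairing_mul_unfold
    (isPairing_addCap (isPairing_mirrorPairing D) (by simpa using h12)
      (mirrorPairing_ne_of_pair_ne hnp true))
    (by simpa using h12.symm) (addCap_mirrorPairing_ne ht hnp hnd) h₁
  rw [Matrix.mul_assoc, ← addCap_addCap_mirrorPairing ht hnp hEp hEd]
  exact h₂

theorem hasMask_prod_of_evalBlob {w : List ℕ} (hw : EvalBlob w B)
    (Ms : List (Matrix (Fin (2 * n) → Fin 2) (Fin (2 * n) → Fin 2) K))
    (hMs : List.Forall₂ (IsLetterMatrix n) w Ms) : HasMask Ms.prod (unfold (mirrorPairing B)) := by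
  induction hw generalizing Ms with
  | nil E hE =>
    cases hMs
    simpa [unfold_mirrorPairing_of_isIdB hE] using hasMask_one
  | consE L B D E _ hB hc _ _ hδ ih =>
    obtain ⟨G, Ms', hG, hMs', rfl⟩ := List.forall₂_cons_left_iff.mp hMs
    exact (ih Ms' hMs').mul_of_isEB hB hc hδ hG
  | consU i L U D E _ _ hU hc hζ hζ' hδ ih =>
    obtain ⟨G, Ms', hG, hMs', rfl⟩ := List.forall₂_cons_left_iff.mp hMs
    exact (ih Ms' hMs').mul_of_isUB hU hc hζ hζ' hδ hG

end Assembly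

lemma Rword_fword {K : Type*} [CommRing K] (x : Kˣ) (m n : ℕ) (w : List ℕ) :
    Rword x m (fword n w) = (w.map fun g => Rword x m (fword n [g])).prod := by
  induction w with
  | nil => rfl
  | cons g w ih =>
    rw [List.map_cons, List.prod_cons, ← ih, ← List.singleton_append, fword, fword, fword,
      List.flatMap_append, Rword, List.map_append, List.prod_append]
    rfl

lemma isLetterMatrix_Rword_fword {K : Type*} [CommRing K] (x : Kˣ) (n g : ℕ) :
    IsLetterMatrix n g (Rword x (2 * n) (fword n [g])) := by
  by_cases hg : g = 0
  · simpa [IsLetterMatrix, hg, Rword, fword] using ⟨x, fun _ _ => Iff.rfl⟩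
  · rw [IsLetterMatrix, if_neg hg]
    exact ⟨x, x, RU x (2 * n) (n - g), RU x (2 * n) (n + g), by simp [Rword, fword, hg],
      fun _ _ => Iff.rfl, fun _ _ => Iff.rfl⟩

theorem statement14_general {K : Type*} [CommRing K] [IsDomain K] (x : Kˣ) {n : ℕ}
    (ρ : BlobDiagram n → Matrix (Fin (2 * n) → Fin 2) (Fin (2 * n) → Fin 2) K)
    (hmir : IsMirror ρ)
    (w : List ℕ) (B : BlobDiagram n) (hw : EvalBlob w B)
    (gs : List (BlobDiagram n)) (hgs : MatchesWord w gs) :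
    MaskEquiv ((gs.map ρ).prod) (Rword x (2 * n) (fword n w)) := by
  obtain ⟨r, s, t, hE, hU⟩ := hmir
  have hρ : List.Forall₂ (IsLetterMatrix n) w (gs.map ρ) := by
    refine List.forall₂_map_right_iff.mpr (hgs.imp fun g d hgd => ?_)
    rcases hgd with ⟨rfl, hd⟩ | ⟨hg, hd⟩
    · simpa [IsLetterMatrix] using ⟨r, hE d hd⟩
    · obtain ⟨X, Y, hXY, hX, hY⟩ := hU g hg hd.1.2.fst
      simpa [IsLetterMatrix, show g ≠ 0 by omega] using ⟨s, t, X, Y, hXY d hd, hX, hY⟩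
  have hR : List.Forall₂ (IsLetterMatrix n) w (w.map fun g => Rword x (2 * n) (fword n [g])) :=
    List.forall₂_map_right_iff.mpr
      (List.forall₂_same.mpr fun g _ => isLetterMatrix_Rword_fword x n g)
  rw [Rword_fword]
  exact (hasMask_prod_of_evalBlob hw _ hρ).maskEquiv (hasMask_prod_of_evalBlob hw _ hR)

/-- Let `ρ` be a mirror representation of `b_n` on `(K²)^{⊗2n}`
and let `w` be a loop-free word in the generators `{e, 𝒰_1, …, 𝒰_{n-1}}` of
`b_n`.  Then the matrix `ρ(w)` (the product of the images of the letters of `w`)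
is mask equivalent to `R(f(w))`. -/
theorem statement14 {K : Type*} [CommRing K] [IsDomain K] (x : Kˣ) (γ δe : K) {n : ℕ}
    (ρ : BlobDiagram n → Matrix (Fin (2 * n) → Fin 2) (Fin (2 * n) → Fin 2) K)
    (hrep : IsBlobRep x γ δe ρ) (hmir : IsMirror ρ)
    (w : List ℕ) (B : BlobDiagram n) (hw : EvalBlob w B)
    (gs : List (BlobDiagram n)) (hgs : MatchesWord w gs) :
    MaskEquiv ((gs.map ρ).prod) (Rword x (2 * n) (fword n w)) :=
  statement14_general x ρ hmir w B hw gs hgs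

end TLBlob
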